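/- (Regret as weighted Bregman divergences) Assume X₁, X₂, … are i.i.d. from an exponential family f_θ(x) = exp(θᵀφ(x) − Φ(θ)), and the online mirror descent with step sizes η_i = 1/i produces dual iterates μ̂_i satisfying μ̂_i = μ̂_{i−1} − (1/i)(μ̂_{i−1} − φ(X_i)) with primal iterates θ̂_i = ∇Φ*(μ̂_i) (no projection, so θ̂_i = θ̃_i). Then the regret R_t = ∑_{i=1}^t(−log f_{θ̂_{i−1}}(X_i)) − inf_{θ̃} ∑_{i=1}^t(−log f_{θ̃}(X_i)) satisfies R_t = ∑_{i=1}^t i · B_{Φ*}(μ̂_i, μ̂_{i−1}), where Φ* is the Legendre-Fenchel conjugate of Φ and B_{Φ*} its Bregman divergence. -/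

import Mathlib

/-!
With step sizes `1 / i` the dual iterate `μ̂_t` is the running mean of the sufficient statistics,
so the `t`-sample negative log-likelihood is `t (Φ θ - ⟪θ, μ̂_t⟫)`, whose infimum is `-t Φ*(μ̂_t)`
by Fenchel–Young, attained at `θ = ∇Φ*(μ̂_t)`. Each online loss
`Φ θ̂_{i-1} - ⟪θ̂_{i-1}, φ(X_i)⟫` equals `i B_{Φ*}(μ̂_i, μ̂_{i-1}) + (i-1) Φ*(μ̂_{i-1}) - i Φ*(μ̂_i)`,
and the last two terms telescope against the infimum.
-/

open MeasureTheory Real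
open scoped RealInnerProductSpace

open Finset

theorem Finset.sum_Icc_one_sub_pred {M : Type*} [AddCommGroup M] (g : ℕ → M) (t : ℕ) :
    ∑ i ∈ Icc 1 t, (g (i - 1) - g i) = g 0 - g t := by
  induction t with
  | zero => simp
  | succ n ih =>
    rw [sum_Icc_succ_top (by omega), ih, Nat.add_sub_cancel]
    abel

section ConvexDuality

variable {E : Type*} [NormedAddCommGroup E] [InnerProductSpace ℝ E]

theorem smul_eq_sum_of_running_mean {μ y : ℕ → E}
    (hμ : ∀ i, 1 ≤ i → μ i = μ (i - 1) - (i : ℝ)⁻¹ • (μ (i - 1) - y i)) (t : ℕ) :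
    (t : ℝ) • μ t = ∑ i ∈ Icc 1 t, y i := by
  induction t with
  | zero => simp
  | succ n ih =>
    rw [sum_Icc_succ_top (by omega), ← ih, hμ (n + 1) (by omega), Nat.add_sub_cancel]
    have hne : ((n : ℝ) + 1) ≠ 0 := by positivity
    push_cast
    rw [smul_sub, smul_smul, mul_inv_cancel₀ hne, one_smul, add_smul, one_smul]
    abel

theorem sum_sub_inner_of_smul_eq_sum (Φ : E → ℝ) {y : ℕ → E} {m : E} {t : ℕ}
    (hm : (t : ℝ) • m = ∑ i ∈ Icc 1 t, y i) (θ : E) :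
    ∑ i ∈ Icc 1 t, (Φ θ - ⟪θ, y i⟫) = t * (Φ θ - ⟪θ, m⟫) := by
  rw [sum_sub_distrib, sum_const, Nat.card_Icc, ← inner_sum, ← hm, real_inner_smul_right,
    nsmul_eq_mul, Nat.add_sub_cancel]
  ring

theorem iInf_sub_inner_eq_neg (Φ Φs : E → ℝ) (z θ : E)
    (hFY : ∀ u, ⟪u, z⟫ - Φ u ≤ Φs z) (hθ : Φs z = ⟪θ, z⟫ - Φ θ) :
    ⨅ u, (Φ u - ⟪u, z⟫) = -Φs z := by
  have hlb : ∀ u, -Φs z ≤ Φ u - ⟪u, z⟫ := fun u => by linarith [hFY u]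
  refine le_antisymm ?_ (le_ciInf hlb)
  exact (ciInf_le ⟨-Φs z, Set.forall_mem_range.2 hlb⟩ θ).trans_eq (by linarith)

theorem sub_inner_eq_bregman_add (Φ Φs : E → ℝ) {θ m m' y : E} {c : ℝ} (hc : c ≠ 0)
    (hm : m = m' - c⁻¹ • (m' - y)) (hθ : Φs m' = ⟪θ, m'⟫ - Φ θ) :
    Φ θ - ⟪θ, y⟫ =
      c * (Φs m - Φs m' - ⟪θ, m - m'⟫) + ((c - 1) * Φs m' - c * Φs m) := by
  have hd : m - m' = -c⁻¹ • (m' - y) := by rw [hm]; module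
  rw [hd, inner_smul_right, hθ, inner_sub_right]
  field_simp
  ring

end ConvexDuality

theorem stmt_11_general {d : ℕ} {S : Type*}
    (φ : S → EuclideanSpace ℝ (Fin d))
    (Φ Φs : EuclideanSpace ℝ (Fin d) → ℝ)
    (gradΦ gradΦs : EuclideanSpace ℝ (Fin d) → EuclideanSpace ℝ (Fin d))
    (f : EuclideanSpace ℝ (Fin d) → S → ℝ)
    (hf : ∀ θ s, f θ s = Real.exp (⟪θ, φ s⟫ - Φ θ))
    (hFY : ∀ z u, ⟪u, z⟫ - Φ u ≤ Φs z)
    (hconj : ∀ θ, Φs (gradΦ θ) = ⟪θ, gradΦ θ⟫ - Φ θ)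
    (hsg : ∀ z, gradΦ (gradΦs z) = z)
    (x : ℕ → S)
    (μhat : ℕ → EuclideanSpace ℝ (Fin d))
    (hμ : ∀ i, 1 ≤ i → μhat i = μhat (i - 1) - ((i : ℝ)⁻¹) • (μhat (i - 1) - φ (x i)))
    (θhat : ℕ → EuclideanSpace ℝ (Fin d))
    (hθ : ∀ i, θhat i = gradΦs (μhat i))
    (B : EuclideanSpace ℝ (Fin d) → EuclideanSpace ℝ (Fin d) → ℝ)
    (hB : ∀ u v, B u v = Φs u - Φs v - ⟪gradΦs v, u - v⟫)
    (R : ℕ → ℝ)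
    (hR : ∀ t, R t = (∑ i ∈ Finset.Icc 1 t, -Real.log (f (θhat (i - 1)) (x i))) -
        ⨅ ϑ : EuclideanSpace ℝ (Fin d), ∑ i ∈ Finset.Icc 1 t, -Real.log (f ϑ (x i))) :
    ∀ t, R t = ∑ i ∈ Finset.Icc 1 t, (i : ℝ) * B (μhat i) (μhat (i - 1)) := by
  intro t
  have hnll : ∀ ϑ i, -Real.log (f ϑ (x i)) = Φ ϑ - ⟪ϑ, φ (x i)⟫ := fun ϑ i => by
    rw [hf, Real.log_exp, neg_sub]
  have hattain : ∀ z, Φs z = ⟪gradΦs z, z⟫ - Φ (gradΦs z) := fun z => by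
    simpa only [hsg] using hconj (gradΦs z)
  have hinf : ⨅ ϑ, ∑ i ∈ Icc 1 t, -Real.log (f ϑ (x i)) = -(t * Φs (μhat t)) := by
    simp_rw [hnll, sum_sub_inner_of_smul_eq_sum Φ (smul_eq_sum_of_running_mean hμ t),
      ← Real.mul_iInf_of_nonneg (Nat.cast_nonneg t),
      iInf_sub_inner_eq_neg Φ Φs _ _ (hFY _) (hattain _), mul_neg]
  have hstep : ∀ i ∈ Icc 1 t, -Real.log (f (θhat (i - 1)) (x i)) =
      i * B (μhat i) (μhat (i - 1)) +
        (((i - 1 : ℕ) : ℝ) * Φs (μhat (i - 1)) - i * Φs (μhat i)) := fun i hi => by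
    have hi1 : 1 ≤ i := (mem_Icc.1 hi).1
    rw [hnll, hB, hθ, Nat.cast_pred hi1]
    exact sub_inner_eq_bregman_add Φ Φs (by positivity) (hμ i hi1) (hattain _)
  rw [hR, hinf, sum_congr rfl hstep, sum_add_distrib,
    sum_Icc_one_sub_pred (fun i => (i : ℝ) * Φs (μhat i)), Nat.cast_zero, zero_mul]
  ring

theorem stmt_11 {d : ℕ} {S : Type*}
    (φ : S → EuclideanSpace ℝ (Fin d))
    (Φ Φs : EuclideanSpace ℝ (Fin d) → ℝ)
    (gradΦ gradΦs : EuclideanSpace ℝ (Fin d) → EuclideanSpace ℝ (Fin d))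
    (f : EuclideanSpace ℝ (Fin d) → S → ℝ)
    (hf : ∀ θ s, f θ s = Real.exp (⟪θ, φ s⟫ - Φ θ))
    (hFY : ∀ z u, ⟪u, z⟫ - Φ u ≤ Φs z)
    (hconj : ∀ θ, Φs (gradΦ θ) = ⟪θ, gradΦ θ⟫ - Φ θ)
    (hgs : ∀ θ, gradΦs (gradΦ θ) = θ)
    (hsg : ∀ z, gradΦ (gradΦs z) = z)
    (x : ℕ → S) (θ₀ : EuclideanSpace ℝ (Fin d))
    (μhat : ℕ → EuclideanSpace ℝ (Fin d))
    (hμ0 : μhat 0 = gradΦ θ₀)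
    (hμ : ∀ i, 1 ≤ i → μhat i = μhat (i - 1) - ((i : ℝ)⁻¹) • (μhat (i - 1) - φ (x i)))
    (θhat : ℕ → EuclideanSpace ℝ (Fin d))
    (hθ : ∀ i, θhat i = gradΦs (μhat i))
    (B : EuclideanSpace ℝ (Fin d) → EuclideanSpace ℝ (Fin d) → ℝ)
    (hB : ∀ u v, B u v = Φs u - Φs v - ⟪gradΦs v, u - v⟫)
    (R : ℕ → ℝ)
    (hR : ∀ t, R t = (∑ i ∈ Finset.Icc 1 t, -Real.log (f (θhat (i - 1)) (x i))) -
        ⨅ ϑ : EuclideanSpace ℝ (Fin d), ∑ i ∈ Finset.Icc 1 t, -Real.log (f ϑ (x i))) :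
    ∀ t, R t = ∑ i ∈ Finset.Icc 1 t, (i : ℝ) * B (μhat i) (μhat (i - 1)) :=
  stmt_11_general φ Φ Φs gradΦ gradΦs f hf hFY hconj hsg x μhat hμ θhat hθ B hB R hR
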